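/- Let ρ be a Borel probability measure on ℝ and E_ρ the associated position observable on L²(ℝ). Then E_ρ is a projection valued measure (i.e. E_ρ(X)² = E_ρ(X) for all Borel X) if and only if ρ = δ_t for some t ∈ ℝ. -/

import Mathlib

/-!
`E_ρ(X)` is multiplication by `x ↦ ρ(X − x)`. Since `L²(ℝ)` contains an a.e. nonvanishing
function (a Gaussian), a multiplication operator is idempotent iff its multiplier takes only the
values `0` and `1` a.e. For `ρ = δ_t` the multiplier is an indicator function. Conversely, taking
`X = (-∞, 0]` shows that the distribution function of `ρ` is a.e. `{0, 1}`-valued; being monotone,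
right-continuous, with limits `0` and `1`, it is then the indicator of `[t, ∞)`, where `t` is the
infimum of the set on which it equals `1`, so `ρ = δ_t`.
-/

open MeasureTheory Complex

noncomputable section

/-- `L²(ℝ)` with Lebesgue measure. -/
abbrev L2 : Type := Lp ℂ 2 (volume : Measure ℝ)

/-- `T` is the operator of multiplication by the bounded function `x ↦ ρ(X − x)`. -/
def IsMulByMeas (ρ : Measure ℝ) (X : Set ℝ) (T : L2 →L[ℂ] L2) : Prop :=
  ∀ f : L2, (T f : ℝ → ℂ) =ᵐ[volume]
    fun x => ((ρ ((· + x) ⁻¹' X)).toReal : ℂ) * (f : ℝ → ℂ) x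

open Set Filter Topology ProbabilityTheory

theorem StieltjesFunction.exists_eq_indicator_Ici (F : StieltjesFunction ℝ)
    (hbot : Tendsto F atBot (𝓝 0)) (htop : Tendsto F atTop (𝓝 1))
    (h01 : ∀ᵐ s, F s = 0 ∨ F s = 1) :
    ∃ t, ∀ s, F s = (Ici t).indicator 1 s := by
  have le_one (s : ℝ) : F s ≤ 1 := F.mono.ge_of_tendsto htop s
  have nonneg (s : ℝ) : 0 ≤ F s := F.mono.le_of_tendsto hbot s
  have exists_mem_Ioo (a b : ℝ) (hab : a < b) : ∃ u ∈ Ioo a b, F u = 0 ∨ F u = 1 :=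
    Measure.exists_mem_of_measure_ne_zero_of_ae (by simpa using hab) (ae_restrict_of_ae h01)
  set U := {s | F s = 1}
  have hU : U.Nonempty := by
    obtain ⟨x, hx⟩ := (htop.eventually (lt_mem_nhds one_half_lt_one)).exists
    obtain ⟨u, hu, hu01⟩ := exists_mem_Ioo x (x + 1) (lt_add_one x)
    refine ⟨u, hu01.resolve_left fun h0 => ?_⟩
    linarith [F.mono hu.1.le]
  have hUbdd : BddBelow U := by
    obtain ⟨x, hx⟩ := (hbot.eventually (gt_mem_nhds one_half_pos)).exists
    refine ⟨x, fun u (hu : F u = 1) => le_of_not_gt fun hux => ?_⟩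
    linarith [F.mono hux.le]
  set t := sInf U
  have eq_one_of_lt (s : ℝ) (hs : t < s) : F s = 1 := by
    obtain ⟨u, hu, hus⟩ := exists_lt_of_csInf_lt hU hs
    exact le_antisymm (le_one s) (hu.symm.le.trans (F.mono hus.le))
  have at_t : F t = 1 := by
    have : ∀ r : Ioi t, F r = 1 := fun r => eq_one_of_lt r r.2
    rw [← F.iInf_Ioi_eq t]
    simp only [this, ciInf_const]
  refine ⟨t, fun s => ?_⟩
  rcases le_or_gt t s with hts | hst
  · rw [indicator_of_mem (mem_Ici.2 hts)]
    exact le_antisymm (le_one s) (at_t.symm.le.trans (F.mono hts))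
  · obtain ⟨u, hu, hu01⟩ := exists_mem_Ioo s t hst
    have hu0 : F u = 0 := hu01.resolve_right fun h1 => notMem_of_lt_csInf hu.2 hUbdd h1
    rw [indicator_of_notMem (notMem_Ici.2 hst)]
    exact le_antisymm (hu0 ▸ F.mono hu.1.le) (nonneg s)

theorem MeasureTheory.Measure.exists_eq_dirac_of_ae_measure_Iic (ρ : Measure ℝ)
    [IsProbabilityMeasure ρ] (h01 : ∀ᵐ s, ρ (Iic s) = 0 ∨ ρ (Iic s) = 1) :
    ∃ t, ρ = dirac t := by
  have hcdf : ∀ᵐ s, cdf ρ s = 0 ∨ cdf ρ s = 1 := h01.mono fun s hs => by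
    rwa [← ofReal_cdf, ENNReal.ofReal_eq_zero, ENNReal.ofReal_eq_one,
      (cdf_nonneg ρ s).ge_iff_eq'] at hs
  obtain ⟨t, ht⟩ :=
    (cdf ρ).exists_eq_indicator_Ici (tendsto_cdf_atBot ρ) (tendsto_cdf_atTop ρ) hcdf
  refine ⟨t, ext_of_Iic _ _ fun s => ?_⟩
  rw [← ofReal_cdf, ht s, dirac_apply]
  by_cases h : t ≤ s <;> simp [h]

theorem exists_L2_ae_ne_zero : ∃ f : L2, ∀ᵐ x, (f : ℝ → ℂ) x ≠ 0 := by
  let g : ℝ → ℂ := fun x => (Real.exp (-x ^ 2) : ℂ)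
  have hg : MemLp g 2 volume := by
    refine (memLp_two_iff_integrable_sq_norm (by fun_prop)).2 ?_
    convert integrable_exp_neg_mul_sq (b := 2) two_pos using 2 with x
    rw [Complex.norm_real, Real.norm_of_nonneg (Real.exp_pos _).le, ← Real.exp_nat_mul]
    ring_nf
  exact ⟨hg.toLp g, hg.coeFn_toLp.mono fun x hx => hx ▸ ofReal_ne_zero.2 (Real.exp_ne_zero _)⟩

theorem comp_self_eq_self_iff_of_ae_eq_mul {T : L2 →L[ℂ] L2} {c : ℝ → ℂ}
    (hT : ∀ f : L2, (T f : ℝ → ℂ) =ᵐ[volume] fun x => c x * f x) :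
    T ∘L T = T ↔ ∀ᵐ x, c x * c x = c x := by
  have hTT (f : L2) : ((T ∘L T) f : ℝ → ℂ) =ᵐ[volume] fun x => c x * c x * f x := by
    filter_upwards [hT (T f), hT f] with x h1 h2
    rw [ContinuousLinearMap.comp_apply, h1, h2, mul_assoc]
  constructor
  · intro h
    obtain ⟨f, hf⟩ := exists_L2_ae_ne_zero
    filter_upwards [hTT f, hT f, hf] with x h1 h2 h3
    rw [h, h2] at h1
    exact mul_right_cancel₀ h3 h1.symm
  · intro hc
    refine ContinuousLinearMap.ext fun f => Lp.ext ?_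
    filter_upwards [hTT f, hT f, hc] with x h1 h2 h3
    rw [h1, h2, h3]

theorem ofReal_toReal_mul_self_eq_self_iff {a : ENNReal} (ha : a ≠ ⊤) :
    ((a.toReal : ℂ) * a.toReal = a.toReal) ↔ a = 0 ∨ a = 1 := by
  rw [← sub_eq_zero, ← mul_sub_one, mul_eq_zero, sub_eq_zero, ofReal_eq_zero, ofReal_eq_one,
    ENNReal.toReal_eq_zero_iff, ENNReal.toReal_eq_one_iff, or_iff_left ha]

theorem IsMulByMeas.comp_self_eq_self_iff {ρ : Measure ℝ} [IsFiniteMeasure ρ] {X : Set ℝ}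
    {T : L2 →L[ℂ] L2} (hT : IsMulByMeas ρ X T) :
    T ∘L T = T ↔ ∀ᵐ x, ρ ((· + x) ⁻¹' X) = 0 ∨ ρ ((· + x) ⁻¹' X) = 1 := by
  simp only [comp_self_eq_self_iff_of_ae_eq_mul hT,
    ofReal_toReal_mul_self_eq_self_iff (measure_ne_top _ _)]

theorem stmt5 (ρ : Measure ℝ) [IsProbabilityMeasure ρ]
    (E : Set ℝ → (L2 →L[ℂ] L2))
    (hE : ∀ X : Set ℝ, MeasurableSet X → IsMulByMeas ρ X (E X)) :
    (∀ X : Set ℝ, MeasurableSet X → (E X) ∘L (E X) = E X) ↔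
      ∃ t : ℝ, ρ = Measure.dirac t := by
  constructor
  · intro hproj
    have hIic := (hE _ measurableSet_Iic).comp_self_eq_self_iff.1 (hproj (Iic 0) measurableSet_Iic)
    apply Measure.exists_eq_dirac_of_ae_measure_Iic
    simpa using (Measure.measurePreserving_neg volume).quasiMeasurePreserving.ae hIic
  · rintro ⟨t, rfl⟩ X hX
    refine (hE X hX).comp_self_eq_self_iff.2 (ae_of_all _ fun x => ?_)
    rw [Measure.dirac_apply]
    by_cases h : t ∈ (· + x) ⁻¹' X <;> simp [h]
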